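/- For every finite simple connected graph G of order at least 2, dim(G) ≤ ψ(G) ≤ 2·γ_M(G) ≤ 2·γ_L(G); moreover, if G has girth at least 5 then the sharper chain dim(G) ≤ ψ(G) ≤ γ_M(G) ≤ γ_L(G) holds. -/

import Mathlib

open SimpleGraph

variable {V : Type*}

/-- `S` is a resolving set of `G`. -/
def isResolvingSet (G : SimpleGraph V) (S : Set V) : Prop :=
  ∀ x y : V, x ≠ y → ∃ u ∈ S, G.dist u x ≠ G.dist u y

/-- `S` is a dominating set of `G`. -/
def isDominatingSet (G : SimpleGraph V) (S : Set V) : Prop :=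
  ∀ x : V, x ∉ S → ∃ u ∈ S, G.Adj u x

/-- `S` is a metric-locating-dominating set of `G`. -/
def isMLDSet (G : SimpleGraph V) (S : Set V) : Prop :=
  isResolvingSet G S ∧ isDominatingSet G S

/-- `S` is a locating-dominating set of `G`. -/
def isLDSet (G : SimpleGraph V) (S : Set V) : Prop :=
  isDominatingSet G S ∧
    ∀ x ∉ S, ∀ y ∉ S, x ≠ y → G.neighborSet x ∩ S ≠ G.neighborSet y ∩ S

/-- vertices `u` and `v` doubly resolve the pair `{x, y}`. -/
def doublyResolves (G : SimpleGraph V) (u v x y : V) : Prop :=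
  (G.dist u x : ℤ) - (G.dist u y : ℤ) ≠ (G.dist v x : ℤ) - (G.dist v y : ℤ)

/-- the set `S` doubly resolves the pair `{x, y}`. -/
def setDoublyResolves (G : SimpleGraph V) (S : Set V) (x y : V) : Prop :=
  ∃ u ∈ S, ∃ v ∈ S, doublyResolves G u v x y

/-- `S` is a doubly resolving set of `G`. -/
def isDoublyResolvingSet (G : SimpleGraph V) (S : Set V) : Prop :=
  ∀ x y : V, x ≠ y → setDoublyResolves G S x y

/-- the metric dimension `dim G`. -/
noncomputable def metricDim (G : SimpleGraph V) : ℕ :=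
  sInf {n | ∃ S : Set V, isResolvingSet G S ∧ S.ncard = n}

/-- the domination number `γ(G)`. -/
noncomputable def domNum (G : SimpleGraph V) : ℕ :=
  sInf {n | ∃ S : Set V, isDominatingSet G S ∧ S.ncard = n}

/-- the metric-location-domination number `γ_M(G)`. -/
noncomputable def mldNum (G : SimpleGraph V) : ℕ :=
  sInf {n | ∃ S : Set V, isMLDSet G S ∧ S.ncard = n}

/-- the location-domination number `γ_L(G)`. -/
noncomputable def ldNum (G : SimpleGraph V) : ℕ :=
  sInf {n | ∃ S : Set V, isLDSet G S ∧ S.ncard = n}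

/-- the minimum cardinality `ψ(G)` of a doubly resolving set. -/
noncomputable def psiNum (G : SimpleGraph V) : ℕ :=
  sInf {n | ∃ S : Set V, isDoublyResolvingSet G S ∧ S.ncard = n}

/-- a leaf: a vertex of degree 1. -/
def isLeaf (G : SimpleGraph V) (x : V) : Prop := (G.neighborSet x).ncard = 1

/-- a support vertex: a vertex adjacent to some leaf. -/
def isSupport (G : SimpleGraph V) (u : V) : Prop := ∃ x, isLeaf G x ∧ G.Adj u x

/-- a strong support vertex: a vertex adjacent to at least two leaves. -/
def isStrongSupport (G : SimpleGraph V) (u : V) : Prop :=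
  2 ≤ {x | isLeaf G x ∧ G.Adj u x}.ncard

/-- `ℓ(G)`: the number of leaves. -/
noncomputable def numLeaves (G : SimpleGraph V) : ℕ := {x | isLeaf G x}.ncard

/-- `ℓ'(G)`: the number of leaves adjacent to a strong support vertex. -/
noncomputable def numStrongLeaves (G : SimpleGraph V) : ℕ :=
  {x | isLeaf G x ∧ ∃ u, isStrongSupport G u ∧ G.Adj u x}.ncard

/-- a major vertex: a vertex of degree at least 3. -/
def isMajor (G : SimpleGraph V) (u : V) : Prop := 3 ≤ (G.neighborSet u).ncard

/-- `x` is a terminal vertex of the major vertex `u`: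
`x` is a leaf and `u` is the major vertex closest to `x`. -/
def isTerminalOf (G : SimpleGraph V) (u x : V) : Prop :=
  isLeaf G x ∧ isMajor G u ∧ ∀ w, isMajor G w → w ≠ u → G.dist u x < G.dist w x

/-- the terminal degree `ter(u)` of `u`. -/
noncomputable def terDeg (G : SimpleGraph V) (u : V) : ℕ :=
  {x | isTerminalOf G u x}.ncard

/-- `G` is (isomorphic to) a path graph. -/
def isPathGraph (G : SimpleGraph V) : Prop :=
  ∃ n : ℕ, Nonempty (G ≃g SimpleGraph.pathGraph n)


/-!
If a pair `{x, y}` is not doubly resolved by a metric-locating-dominating set `S`, then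
`d(w, x) - d(w, y)` is the same nonzero constant for all `w ∈ S`; domination forces this constant
to be `±1`, realised by a vertex of `S` adjacent to the other vertex of the pair, which lies
outside `S` and is "hidden behind" it. Since `S` resolves, each `y ∈ S` hides at most one vertex,
its shadow, and adding all shadows to `S` doubly resolves every pair: `ψ ≤ 2 γ_M`.

When the girth is at least `5`, a hidden vertex is a leaf, and a leaf simulates its neighbour
on every pair avoiding it. So it suffices to replace each vertex of `S` by its shadow: pairs
containing a shadow leaf are doubly resolved by the leaf itself and any other vertex, by the
triangle inequality through the leaf's neighbour. Hence `ψ ≤ γ_M`.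
-/

section

variable {G : SimpleGraph V} {S T : Set V} {x y : V}

lemma doublyResolves_self (hconn : G.Connected) (hxy : x ≠ y) : doublyResolves G x y x y := by
  have := hconn.pos_dist_of_ne hxy
  unfold doublyResolves
  rw [dist_self, dist_self, dist_comm (u := y)]
  omega

lemma setDoublyResolves.symm (h : setDoublyResolves G S x y) : setDoublyResolves G S y x := by
  obtain ⟨u, hu, v, hv, h⟩ := h
  exact ⟨u, hu, v, hv, by unfold doublyResolves at h ⊢; omega⟩

lemma setDoublyResolves.mono (h : setDoublyResolves G S x y) (hST : S ⊆ T) :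
    setDoublyResolves G T x y := by
  obtain ⟨u, hu, v, hv, h⟩ := h
  exact ⟨u, hST hu, v, hST hv, h⟩

lemma isDoublyResolvingSet.isResolvingSet (hS : isDoublyResolvingSet G S) :
    isResolvingSet G S := by
  intro x y hxy
  by_contra! h
  obtain ⟨u, hu, v, hv, huv⟩ := hS x y hxy
  exact huv (by rw [h u hu, h v hv]; ring)

lemma isLDSet_univ : isLDSet G Set.univ :=
  ⟨fun _ hx => absurd trivial hx, fun _ hx => absurd trivial hx⟩

lemma isLDSet.isMLDSet (hconn : G.Connected) (hS : isLDSet G S) : isMLDSet G S := by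
  obtain ⟨hdom, hloc⟩ := hS
  refine ⟨fun x y hxy => ?_, hdom⟩
  by_cases hx : x ∈ S
  · exact ⟨x, hx, by rw [dist_self]; exact (hconn.pos_dist_of_ne hxy).ne⟩
  by_cases hy : y ∈ S
  · exact ⟨y, hy, by rw [dist_self]; exact (hconn.pos_dist_of_ne hxy.symm).ne'⟩
  by_contra! h
  refine hloc x hx y hy hxy (Set.ext fun u => ?_)
  simp only [Set.mem_inter_iff, mem_neighborSet, and_congr_left_iff]
  intro hu
  rw [G.adj_comm x u, G.adj_comm y u, ← dist_eq_one_iff_adj, ← dist_eq_one_iff_adj, h u hu]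

def isHiddenBehind (G : SimpleGraph V) (S : Set V) (x y : V) : Prop :=
  x ∉ S ∧ y ∈ S ∧ G.Adj y x ∧ ∀ w ∈ S, G.dist w x = G.dist w y + 1

lemma isHiddenBehind.unique {x' : V} (hres : isResolvingSet G S) (h : isHiddenBehind G S x y)
    (h' : isHiddenBehind G S x' y) : x = x' := by
  by_contra hne
  obtain ⟨u, hu, hdu⟩ := hres x x' hne
  exact hdu ((h.2.2.2 u hu).trans (h'.2.2.2 u hu).symm)

lemma isHiddenBehind_of_dist_eq_add (hconn : G.Connected) (hdom : isDominatingSet G S) {c : ℤ}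
    (hc : 0 < c) (h : ∀ w ∈ S, (G.dist w x : ℤ) = G.dist w y + c) :
    isHiddenBehind G S x y := by
  have hx : x ∉ S := fun hx => by have := h x hx; rw [dist_self] at this; omega
  obtain ⟨u, hu, hux⟩ := hdom x hx
  have hdux := h u hu
  rw [dist_eq_one_iff_adj.mpr hux] at hdux
  obtain rfl : u = y := hconn.dist_eq_zero_iff.mp (by omega)
  exact ⟨hx, hu, hux, fun w hw => by have := h w hw; omega⟩

lemma isHiddenBehind_or_of_not_setDoublyResolves (hconn : G.Connected) (hS : isMLDSet G S)
    (hxy : x ≠ y) (h : ¬ setDoublyResolves G S x y) :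
    isHiddenBehind G S x y ∨ isHiddenBehind G S y x := by
  simp only [setDoublyResolves, doublyResolves, not_exists, not_and, not_not] at h
  obtain ⟨u, hu, hdu⟩ := hS.1 x y hxy
  set c : ℤ := G.dist u x - G.dist u y
  have hc : c ≠ 0 := by omega
  rcases hc.lt_or_gt with hc | hc
  · exact .inr <| isHiddenBehind_of_dist_eq_add hconn hS.2 (c := -c) (by omega)
      fun w hw => by have := h w hw u hu; omega
  · exact .inl <| isHiddenBehind_of_dist_eq_add hconn hS.2 hc
      fun w hw => by have := h w hw u hu; omega

open Classical in
noncomputable def shadow (G : SimpleGraph V) (S : Set V) (y : V) : V :=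
  if h : ∃ x, isHiddenBehind G S x y then h.choose else y

lemma shadow_eq (hres : isResolvingSet G S) (h : isHiddenBehind G S x y) : shadow G S y = x := by
  have hex : ∃ x, isHiddenBehind G S x y := ⟨x, h⟩
  rw [shadow, dif_pos hex]
  exact hex.choose_spec.unique hres h

lemma isHiddenBehind_shadow_or_eq (y : V) :
    isHiddenBehind G S (shadow G S y) y ∨ shadow G S y = y := by
  by_cases h : ∃ x, isHiddenBehind G S x y
  · left
    rw [shadow, dif_pos h]
    exact h.choose_spec
  · exact .inr (dif_neg h)

lemma isDoublyResolvingSet_union_image_shadow (hconn : G.Connected) (hS : isMLDSet G S) :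
    isDoublyResolvingSet G (S ∪ shadow G S '' S) := by
  have hidden : ∀ {a b : V}, a ≠ b → isHiddenBehind G S a b →
      setDoublyResolves G (S ∪ shadow G S '' S) a b := fun {a b} hab h =>
    ⟨a, .inr ⟨b, h.2.1, shadow_eq hS.1 h⟩, b, .inl h.2.1, doublyResolves_self hconn hab⟩
  intro x y hxy
  by_contra hxyT
  rcases isHiddenBehind_or_of_not_setDoublyResolves hconn hS hxy
    fun h => hxyT (h.mono Set.subset_union_left) with h | h
  · exact hxyT (hidden hxy h)
  · exact hxyT (hidden hxy.symm h).symm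

lemma exists_isDoublyResolvingSet_ncard_le_two_mul [Finite V] (hconn : G.Connected)
    (hS : isMLDSet G S) : ∃ T, isDoublyResolvingSet G T ∧ T.ncard ≤ 2 * S.ncard := by
  refine ⟨_, isDoublyResolvingSet_union_image_shadow hconn hS, ?_⟩
  calc (S ∪ shadow G S '' S).ncard ≤ S.ncard + (shadow G S '' S).ncard := Set.ncard_union_le _ _
    _ ≤ 2 * S.ncard := by have := Set.ncard_image_le (f := shadow G S) S.toFinite; omega

end

section Girth

variable {G : SimpleGraph V} {S : Set V} {a b u x y w : V}

lemma girth_le_three {c : V} (h₁ : G.Adj a b) (h₂ : G.Adj b c) (h₃ : G.Adj c a) :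
    G.girth ≤ 3 := by
  have hc : (Walk.cons h₁ (.cons h₂ (.cons h₃ .nil))).IsCycle := by
    simp [Walk.cons_isCycle_iff, h₁.ne, h₂.ne, h₃.ne, h₁.ne.symm, h₃.ne.symm]
  simpa using girth_le_length hc

lemma girth_le_four {c d : V} (h₁ : G.Adj a b) (h₂ : G.Adj b c) (h₃ : G.Adj c d)
    (h₄ : G.Adj d a) (hac : a ≠ c) (hbd : b ≠ d) : G.girth ≤ 4 := by
  have hc : (Walk.cons h₁ (.cons h₂ (.cons h₃ (.cons h₄ .nil)))).IsCycle := by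
    simp [Walk.cons_isCycle_iff, h₁.ne, h₂.ne, h₃.ne, h₄.ne, h₁.ne.symm, h₄.ne.symm, hac, hbd,
      hac.symm]
  simpa using girth_le_length hc

lemma two_lt_card_of_not_isAcyclic [Fintype V] (hG : ¬ G.IsAcyclic) : 2 < Fintype.card V := by
  obtain ⟨a, w, hw, -⟩ := exists_girth_eq_length.mpr hG
  have := hw.isPath_tail.length_lt
  have := w.length_tail_add_one hw.not_nil
  have := hw.three_le_length
  omega

lemma dist_eq_dist_add_one_of_neighborSet_eq (hconn : G.Connected) (hN : G.neighborSet x = {y})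
    (hw : w ≠ x) : G.dist w x = G.dist w y + 1 := by
  have hxy : G.Adj x y := (Set.ext_iff.mp hN y).mpr rfl
  have hle : G.dist w x ≤ G.dist w y + 1 := by
    have := hconn.dist_triangle (u := w) (v := y) (w := x)
    rwa [dist_eq_one_iff_adj.mpr hxy.symm] at this
  obtain ⟨p, hp⟩ := hconn.exists_walk_length_eq_dist x w
  cases p with
  | nil => exact absurd rfl hw
  | @cons _ z _ hxz q =>
    obtain rfl : z = y := by simpa [hN] using (show z ∈ G.neighborSet x from hxz)
    have := dist_le q
    rw [Walk.length_cons] at hp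
    have := G.dist_comm (u := w) (v := x)
    have := G.dist_comm (u := w) (v := z)
    omega

lemma dist_sub_dist_eq_of_neighborSet_eq (hconn : G.Connected) (hN : G.neighborSet x = {y})
    (ha : a ≠ x) (hb : b ≠ x) :
    (G.dist x a : ℤ) - G.dist x b = (G.dist y a : ℤ) - G.dist y b := by
  rw [dist_comm (u := x), dist_comm (u := x), dist_comm (u := y), dist_comm (u := y),
    dist_eq_dist_add_one_of_neighborSet_eq hconn hN ha,
    dist_eq_dist_add_one_of_neighborSet_eq hconn hN hb]
  push_cast
  ring

lemma doublyResolves_of_neighborSet_eq (hconn : G.Connected) (hN : G.neighborSet b = {y})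
    (hub : u ≠ b) (hab : a ≠ b) : doublyResolves G u b a b := by
  have hub' := dist_eq_dist_add_one_of_neighborSet_eq hconn hN hub
  have hab' := dist_eq_dist_add_one_of_neighborSet_eq hconn hN hab
  have := hconn.dist_triangle (u := u) (v := y) (w := a)
  unfold doublyResolves
  rw [dist_self, dist_comm (u := b), hab', hub', dist_comm (u := a)]
  omega

lemma isHiddenBehind.neighborSet_eq (hconn : G.Connected) (hg : 5 ≤ G.girth)
    (hS : isMLDSet G S) (h : isHiddenBehind G S x y) : G.neighborSet x = {y} := by
  obtain ⟨hxS, hyS, hyx, hd⟩ := h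
  refine Set.eq_singleton_iff_unique_mem.mpr ⟨hyx.symm, fun z hxz => ?_⟩
  by_contra hzy
  have hzS : z ∉ S := fun hz => hzy <| hconn.dist_eq_zero_iff.mp <| by
    have := hd z hz
    rw [dist_eq_one_iff_adj.mpr hxz.symm] at this
    omega
  obtain ⟨w, hwS, hwz⟩ := hS.2 z hzS
  have hwx := hd w hwS
  have := hconn.dist_triangle (u := w) (v := z) (w := x)
  rw [dist_eq_one_iff_adj.mpr hwz, dist_eq_one_iff_adj.mpr hxz.symm] at this
  rcases (by omega : G.dist w y = 0 ∨ G.dist w y = 1) with hwy | hwy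
  · obtain rfl := hconn.dist_eq_zero_iff.mp hwy
    have := girth_le_three hxz hwz.symm hyx
    omega
  · have hxw : x ≠ w := fun h => hxS (h ▸ hwS)
    have := girth_le_four hxz hwz.symm (dist_eq_one_iff_adj.mp hwy) hyx hxw hzy
    omega

lemma shadow_injOn (hconn : G.Connected) (hg : 5 ≤ G.girth) (hS : isMLDSet G S) :
    Set.InjOn (shadow G S) S := by
  intro y hy y' hy' hyy'
  rcases isHiddenBehind_shadow_or_eq (S := S) y with h | h <;>
    rcases isHiddenBehind_shadow_or_eq (S := S) y' with h' | h'
  · have : y ∈ G.neighborSet (shadow G S y') := by rw [← hyy']; exact h.2.2.1.symm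
    rwa [h'.neighborSet_eq hconn hg hS] at this
  · exact (h.1 (by rw [hyy', h']; exact hy')).elim
  · exact (h'.1 (by rw [← hyy', h]; exact hy)).elim
  · rw [← h, hyy', h']

lemma exists_mem_ne_of_isMLDSet [Fintype V] (hS : isMLDSet G S) (hV : 2 < Fintype.card V)
    (y : V) : ∃ y' ∈ S, y' ≠ y := by
  classical
  by_contra! hSy
  have hdist : ∀ x ≠ y, G.dist y x = 1 := fun x hx => by
    obtain ⟨u, hu, hux⟩ := hS.2 x fun hxS => hx (hSy x hxS)
    rw [← hSy u hu]
    exact dist_eq_one_iff_adj.mpr hux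
  have : 1 < (Finset.univ.erase y).card := by
    rw [Finset.card_erase_of_mem (Finset.mem_univ y), Finset.card_univ]
    omega
  obtain ⟨x, hx, x', hx', hxx'⟩ := Finset.one_lt_card.mp this
  obtain ⟨u, hu, hdu⟩ := hS.1 x x' hxx'
  rw [hSy u hu] at hdu
  exact hdu <|
    (hdist x (Finset.ne_of_mem_erase hx)).trans (hdist x' (Finset.ne_of_mem_erase hx')).symm

lemma isDoublyResolvingSet_image_shadow [Fintype V] (hconn : G.Connected) (hg : 5 ≤ G.girth)
    (hS : isMLDSet G S) : isDoublyResolvingSet G (shadow G S '' S) := by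
  have hV := two_lt_card_of_not_isAcyclic (fun h => by rw [girth_eq_zero.mpr h] at hg; omega)
  have leaf : ∀ {a b y}, a ≠ b → isHiddenBehind G S b y →
      setDoublyResolves G (shadow G S '' S) a b := by
    intro a b y hab hb
    obtain ⟨y', hy', hy'y⟩ := exists_mem_ne_of_isMLDSet hS hV y
    have hbT : shadow G S y = b := shadow_eq hS.1 hb
    have hy'b : shadow G S y' ≠ b := fun h =>
      hy'y (shadow_injOn hconn hg hS hy' hb.2.1 (h.trans hbT.symm))
    exact ⟨_, ⟨y', hy', rfl⟩, b, ⟨y, hb.2.1, hbT⟩,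
      doublyResolves_of_neighborSet_eq hconn (hb.neighborSet_eq hconn hg hS) hy'b hab⟩
  intro a b hab
  by_cases ha : ∃ y, isHiddenBehind G S a y
  · exact (leaf hab.symm ha.choose_spec).symm
  by_cases hb : ∃ y, isHiddenBehind G S b y
  · exact leaf hab hb.choose_spec
  have hsame : ∀ w ∈ S, (G.dist (shadow G S w) a : ℤ) - G.dist (shadow G S w) b =
      (G.dist w a : ℤ) - G.dist w b := by
    intro w hw
    rcases isHiddenBehind_shadow_or_eq (S := S) w with h | h
    · exact dist_sub_dist_eq_of_neighborSet_eq hconn (h.neighborSet_eq hconn hg hS)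
        (fun e => ha ⟨w, e ▸ h⟩) (fun e => hb ⟨w, e ▸ h⟩)
    · rw [h]
  by_contra hT
  refine (isHiddenBehind_or_of_not_setDoublyResolves hconn hS hab ?_).elim
    (fun h => ha ⟨b, h⟩) (fun h => hb ⟨a, h⟩)
  rintro ⟨u, hu, v, hv, huv⟩
  refine hT ⟨_, ⟨u, hu, rfl⟩, _, ⟨v, hv, rfl⟩, ?_⟩
  unfold doublyResolves at huv ⊢
  rwa [hsame u hu, hsame v hv]

end Girth

lemma sInf_ncard_le {P Q : Set V → Prop} (f : ℕ → ℕ) (hP : ∃ S, P S)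
    (h : ∀ S, P S → ∃ T, Q T ∧ T.ncard ≤ f S.ncard) :
    sInf {n | ∃ T, Q T ∧ T.ncard = n} ≤ f (sInf {n | ∃ S, P S ∧ S.ncard = n}) := by
  obtain ⟨S₀, hS₀⟩ := hP
  obtain ⟨S, hS, hSn⟩ :=
    Nat.sInf_mem (s := {n | ∃ S, P S ∧ S.ncard = n}) ⟨_, S₀, hS₀, rfl⟩
  obtain ⟨T, hT, hTS⟩ := h S hS
  exact le_trans (Nat.sInf_le ⟨T, hT, rfl⟩) (hSn ▸ hTS)

theorem stmt19_general {V : Type*} [Fintype V] (G : SimpleGraph V)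
    (hconn : G.Connected) :
    (metricDim G ≤ psiNum G ∧ psiNum G ≤ 2 * mldNum G ∧
        2 * mldNum G ≤ 2 * ldNum G) ∧
      (5 ≤ G.girth →
        metricDim G ≤ psiNum G ∧ psiNum G ≤ mldNum G ∧ mldNum G ≤ ldNum G) := by
  have hLD : ∃ S, isLDSet G S := ⟨_, isLDSet_univ⟩
  have hMLD : ∃ S, isMLDSet G S := hLD.imp fun _ hS => hS.isMLDSet hconn
  have hDR : ∃ S, isDoublyResolvingSet G S :=
    let ⟨_, hS⟩ := hMLD
    (exists_isDoublyResolvingSet_ncard_le_two_mul hconn hS).imp fun _ hT => hT.1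
  have hdim : metricDim G ≤ psiNum G :=
    sInf_ncard_le id hDR fun S hS => ⟨S, hS.isResolvingSet, le_rfl⟩
  have hmld : mldNum G ≤ ldNum G :=
    sInf_ncard_le id hLD fun S hS => ⟨S, hS.isMLDSet hconn, le_rfl⟩
  have hpsi : psiNum G ≤ 2 * mldNum G :=
    sInf_ncard_le (2 * ·) hMLD fun _ hS => exists_isDoublyResolvingSet_ncard_le_two_mul hconn hS
  refine ⟨⟨hdim, hpsi, by omega⟩, fun hg => ⟨hdim, ?_, hmld⟩⟩
  exact sInf_ncard_le id hMLD fun S hS =>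
    ⟨_, isDoublyResolvingSet_image_shadow hconn hg hS, Set.ncard_image_le S.toFinite⟩

theorem stmt19 {V : Type*} [Fintype V] (G : SimpleGraph V)
    (hconn : G.Connected) (hcard : 2 ≤ Fintype.card V) :
    (metricDim G ≤ psiNum G ∧ psiNum G ≤ 2 * mldNum G ∧
        2 * mldNum G ≤ 2 * ldNum G) ∧
      (5 ≤ G.girth →
        metricDim G ≤ psiNum G ∧ psiNum G ≤ mldNum G ∧ mldNum G ≤ ldNum G) :=
  stmt19_general G hconn
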